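/- Equal probability of being among the worst-off 5% across groups does not imply equal bottom-5% group means, and vice versa: there exist populations and utility assignments witnessing failure of each implication. -/

import Mathlib

open Finset

noncomputable def fmean {α : Type*} (G : Finset α) (u : α → ℝ) : ℝ :=
  (∑ i ∈ G, u i) / G.card

/-- The mean of the k smallest utility values in G, expressed as the minimum
of the mean over all k-element subsets of G. -/
noncomputable def botMean {α : Type*} [DecidableEq α]
    (G : Finset α) (u : α → ℝ) (k : ℕ) : ℝ :=
  if h : (G.powersetCard k).Nonempty then
    (G.powersetCard k).inf' h (fun S => fmean S u)
  else 0

/-- Setting: population Fin n with 20 ∣ n, injective utility u, W the set of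
the n/20 worst-off individuals, and a partition into nonempty groups G₁, G₂.
Criterion A: equal probability of being among the worst-off 5% across groups.
Criterion B: equal bottom-⌈|G|/20⌉ means across groups. -/
def Setting (n : ℕ) (u : Fin n → ℝ) (W G₁ G₂ : Finset (Fin n)) : Prop :=
  20 ∣ n ∧ Function.Injective u ∧
  W.card = n / 20 ∧ (∀ i ∈ W, ∀ j ∉ W, u i < u j) ∧
  G₁.Nonempty ∧ G₂.Nonempty ∧ Disjoint G₁ G₂ ∧ G₁ ∪ G₂ = Finset.univ

def CritA {n : ℕ} (W G₁ G₂ : Finset (Fin n)) : Prop :=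
  ((W ∩ G₁).card : ℝ) / G₁.card = ((W ∩ G₂).card : ℝ) / G₂.card

noncomputable def CritB {n : ℕ} (u : Fin n → ℝ) (G₁ G₂ : Finset (Fin n)) : Prop :=
  botMean G₁ u ((G₁.card + 19) / 20) = botMean G₂ u ((G₂.card + 19) / 20)

/-! Both counterexamples live on a population of 40 people with utility `u i = i`, so the
worst-off 5% are `W = {0, 1}` and the bottom mean of a group is the plain mean of its
smallest members. Splitting into evens and odds puts one worst-off person in each group of 20
(criterion A), while the bottom-1 means are `0 ≠ 1`. Isolating person `1` gives bottom means
`1 = (0 + 2) / 2`, while the shares of worst-off people are `1/1 ≠ 1/39`. -/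

section BottomMean

lemma Finset.sum_le_sum_of_card_eq_of_forall_le {ι M : Type*} [AddCommMonoid M] [LinearOrder M]
    [IsOrderedAddMonoid M] {s t : Finset ι} {f : ι → M} (hcard : s.card = t.card)
    (hle : ∀ i ∈ s, ∀ j ∈ t, f i ≤ f j) : ∑ i ∈ s, f i ≤ ∑ j ∈ t, f j := by
  rcases s.eq_empty_or_nonempty with rfl | hs
  · rw [card_empty, eq_comm, card_eq_zero] at hcard
    simp [hcard]
  calc ∑ i ∈ s, f i ≤ s.card • s.sup' hs f := sum_le_card_nsmul _ _ _ fun i hi => le_sup' f hi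
    _ = t.card • s.sup' hs f := by rw [hcard]
    _ ≤ ∑ j ∈ t, f j := card_nsmul_le_sum _ _ _ fun j hj => sup'_le hs f fun i hi => hle i hi j hj

variable {α : Type*} [DecidableEq α] {G S : Finset α} {u : α → ℝ} {k : ℕ}

/-- `S` and `T` share `S ∩ T`, and their remaining parts are equally large with `S \ T` lying
below `T \ S`. -/
lemma fmean_le_fmean_of_forall_le {T : Finset α} (hcard : S.card = T.card) (hT : T ⊆ G)
    (hS : ∀ i ∈ S, ∀ j ∈ G \ S, u i ≤ u j) : fmean S u ≤ fmean T u := by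
  have hdiff : ∑ i ∈ S \ T, u i ≤ ∑ j ∈ T \ S, u j :=
    sum_le_sum_of_card_eq_of_forall_le (card_sdiff_comm hcard) fun i hi j hj =>
      hS i (mem_sdiff.1 hi).1 j (sdiff_subset_sdiff hT subset_rfl hj)
  have hsum : ∑ i ∈ S, u i ≤ ∑ j ∈ T, u j := by
    rw [← sum_inter_add_sum_sdiff S T, ← sum_inter_add_sum_sdiff T S, inter_comm]
    gcongr
  unfold fmean
  rw [hcard]
  gcongr

lemma botMean_eq_fmean (hSG : S ⊆ G) (hk : S.card = k)
    (hS : ∀ i ∈ S, ∀ j ∈ G \ S, u i ≤ u j) : botMean G u k = fmean S u := by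
  have hmem : S ∈ G.powersetCard k := mem_powersetCard.2 ⟨hSG, hk⟩
  rw [botMean, dif_pos ⟨S, hmem⟩]
  refine le_antisymm (inf'_le _ hmem) (le_inf' _ _ fun T hT => ?_)
  rw [mem_powersetCard] at hT
  exact fmean_le_fmean_of_forall_le (hk.trans hT.2.symm) hT.1 hS

lemma botMean_eq_fmean_of_monotone [LinearOrder α] (hu : Monotone u) (hSG : S ⊆ G)
    (hk : S.card = k) (hS : ∀ i ∈ S, ∀ j ∈ G \ S, i ≤ j) : botMean G u k = fmean S u :=
  botMean_eq_fmean hSG hk fun i hi j hj => hu (hS i hi j hj)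

end BottomMean

lemma natCast_val_monotone {n : ℕ} : Monotone fun i : Fin n => ((i : ℕ) : ℝ) :=
  fun _ _ h => Nat.cast_le.2 h

lemma setting_compl {n : ℕ} (hn : 20 ∣ n) (b : Fin n) (hb : (b : ℕ) = n / 20)
    {G : Finset (Fin n)} (hG : G.Nonempty) (hGc : Gᶜ.Nonempty) :
    Setting n (fun i => ((i : ℕ) : ℝ)) (Iio b) G Gᶜ := by
  refine ⟨hn, fun i j hij => Fin.ext (Nat.cast_injective hij), by rw [Fin.card_Iio, hb],
    fun i hi j hj => ?_, hG, hGc, disjoint_compl_right, union_compl G⟩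
  exact Nat.cast_lt.2 ((mem_Iio.1 hi).trans_le (not_lt.1 (mt mem_Iio.2 hj)))

lemma critA_and_not_critB_evens :
    let G : Finset (Fin 40) := univ.filter fun i => Even (i : ℕ)
    CritA (Iio 2) G Gᶜ ∧ ¬ CritB (fun i => ((i : ℕ) : ℝ)) G Gᶜ := by
  intro G
  have hG : G.card = 20 := by decide
  have hGc : Gᶜ.card = 20 := by decide
  refine ⟨?_, ?_⟩
  · have h₁ : (Iio 2 ∩ G).card = 1 := by decide
    have h₂ : (Iio 2 ∩ Gᶜ).card = 1 := by decide
    rw [CritA, h₁, h₂, hG, hGc]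
  · have hmin : botMean G (fun i => ((i : ℕ) : ℝ)) 1 = 0 := by
      rw [botMean_eq_fmean_of_monotone (G := G) (S := {0}) (k := 1) natCast_val_monotone
        (by decide) rfl (by decide)]
      simp [fmean]
    have hminc : botMean Gᶜ (fun i => ((i : ℕ) : ℝ)) 1 = 1 := by
      rw [botMean_eq_fmean_of_monotone (G := Gᶜ) (S := {1}) (k := 1) natCast_val_monotone
        (by decide) rfl (by decide)]
      simp [fmean]
    rw [CritB, hG, hGc, hmin, hminc]
    norm_num

lemma critB_and_not_critA_singleton :
    let G : Finset (Fin 40) := {1}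
    CritB (fun i => ((i : ℕ) : ℝ)) G Gᶜ ∧ ¬ CritA (Iio 2) G Gᶜ := by
  intro G
  have hGc : Gᶜ.card = 39 := by decide
  refine ⟨?_, ?_⟩
  · have hmin : botMean G (fun i => ((i : ℕ) : ℝ)) 1 = 1 := by
      rw [botMean_eq_fmean_of_monotone (G := G) (S := G) (k := 1) natCast_val_monotone
        subset_rfl rfl (by decide)]
      simp [G, fmean]
    have hminc : botMean Gᶜ (fun i => ((i : ℕ) : ℝ)) 2 = 1 := by
      rw [botMean_eq_fmean_of_monotone (G := Gᶜ) (S := {0, 2}) (k := 2) natCast_val_monotone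
        (by decide) rfl (by decide)]
      rw [fmean, sum_pair (by decide), card_pair (by decide)]
      norm_num
    rw [CritB, hGc, card_singleton, hmin, hminc]
  · have h₁ : (Iio 2 ∩ G).card = 1 := by decide
    have h₂ : (Iio 2 ∩ Gᶜ).card = 1 := by decide
    rw [CritA, h₁, h₂, card_singleton, hGc]
    norm_num

/-- neither criterion implies the other. -/
theorem stmt19 :
    (∃ (n : ℕ) (u : Fin n → ℝ) (W G₁ G₂ : Finset (Fin n)),
      Setting n u W G₁ G₂ ∧ CritA W G₁ G₂ ∧ ¬ CritB u G₁ G₂) ∧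
    (∃ (n : ℕ) (u : Fin n → ℝ) (W G₁ G₂ : Finset (Fin n)),
      Setting n u W G₁ G₂ ∧ CritB u G₁ G₂ ∧ ¬ CritA W G₁ G₂) := by
  refine ⟨⟨40, _, Iio 2, _, _, setting_compl (by norm_num) 2 rfl ⟨0, by decide⟩ ⟨1, by decide⟩,
    critA_and_not_critB_evens⟩, ⟨40, _, Iio 2, _, _,
    setting_compl (by norm_num) 2 rfl (singleton_nonempty 1) ⟨0, by decide⟩,
    critB_and_not_critA_singleton⟩⟩
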